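/- arXiv:2307.13223 — 7 statements merged into one kernel-verified Lean document; each statement's English description precedes it below -/
import Mathlib

section
/- Let H : ℝ → ℝ be a smooth function satisfying the ODE H''(x) − (H'(x))² = 2·H'(x) for all x. Then either H'(x) = −2 for all x, or there exists a constant a such that H'(x) = −2·a·e^{2x}/(1 + a·e^{2x}) for all x in the domain where 1 + a·e^{2x} ≠ 0. -/
open Real

theorem stmt1 (H : ℝ → ℝ) (hH : ContDiff ℝ (⊤ : ℕ∞) H)
    (hode : ∀ x, deriv (deriv H) x - (deriv H x) ^ 2 = 2 * deriv H x) :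
    (∀ x, deriv H x = -2) ∨
      ∃ a : ℝ, ∀ x, 1 + a * Real.exp (2 * x) ≠ 0 →
        deriv H x = -(2 * a * Real.exp (2 * x)) / (1 + a * Real.exp (2 * x)) := by
  have hHd : Differentiable ℝ H := hH.differentiable (by simp)
  have hH'd : Differentiable ℝ (deriv H) := by
    have h2 : ContDiff ℝ (⊤ : ℕ∞) H := hH.of_le (by simp)
    exact (contDiff_infty_iff_deriv.mp h2).2.differentiable (by simp)
  set φ : ℝ → ℝ := fun x => Real.exp (-H x) with hφ
  set ψ : ℝ → ℝ := fun x => -(deriv H x) * Real.exp (-H x) with hψ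
  have hφpos : ∀ x, 0 < φ x := fun x => Real.exp_pos _
  have hφderiv : ∀ x, HasDerivAt φ (ψ x) x := by
    intro x
    have := ((hHd x).hasDerivAt.neg).exp
    simpa [hψ, mul_comm] using this
  have hψderiv : ∀ x, HasDerivAt ψ (2 * ψ x) x := by
    intro x
    have h1 : HasDerivAt (fun x => -(deriv H x)) (-(deriv (deriv H) x)) x :=
      (hH'd x).hasDerivAt.neg
    have h2 : HasDerivAt (fun x => Real.exp (-H x)) (-(deriv H x) * Real.exp (-H x)) x := by
      simpa [mul_comm] using ((hHd x).hasDerivAt.neg).exp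
    have h := h1.mul h2
    have key : -(deriv (deriv H)) x * Real.exp (-H x) +
        (fun x => -(deriv H x)) x * (-(deriv H x) * Real.exp (-H x)) = 2 * ψ x := by
      have h3 : deriv (deriv H) x = (deriv H x) ^ 2 + 2 * deriv H x := by linarith [hode x]
      simp only [hψ, Pi.neg_apply, h3]
      ring
    rw [key] at h
    exact h
  -- ψ x = ψ 0 * exp (2x)
  have hψeq : ∀ x, ψ x = ψ 0 * Real.exp (2 * x) := by
    have hdiff : ∀ x, HasDerivAt (fun x => ψ x * Real.exp (-(2 * x))) 0 x := by
      intro x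
      have he : HasDerivAt (fun x : ℝ => Real.exp (-(2 * x))) (-2 * Real.exp (-(2 * x))) x := by
        have : HasDerivAt (fun x : ℝ => -(2 * x)) (-2) x := by
          simpa using ((hasDerivAt_id x).const_mul 2).fun_neg
        simpa [mul_comm] using this.exp
      have := (hψderiv x).mul he
      refine this.congr_deriv ?_
      ring
    have hconst : ∀ x, ψ x * Real.exp (-(2 * x)) = ψ 0 := by
      intro x
      have := is_const_of_deriv_eq_zero (fun x => (hdiff x).differentiableAt)
        (fun x => (hdiff x).deriv) x 0
      simpa using this
    intro x
    have h := hconst x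
    have hE : Real.exp (-(2 * x)) * Real.exp (2 * x) = 1 := by
      rw [← Real.exp_add]; simp
    calc ψ x = ψ x * (Real.exp (-(2 * x)) * Real.exp (2 * x)) := by rw [hE]; ring
      _ = (ψ x * Real.exp (-(2 * x))) * Real.exp (2 * x) := by ring
      _ = ψ 0 * Real.exp (2 * x) := by rw [h]
  set C : ℝ := ψ 0 with hC
  -- φ x = A + C/2 * exp (2x)
  set A : ℝ := φ 0 - C / 2 with hA
  have hφeq : ∀ x, φ x = A + C / 2 * Real.exp (2 * x) := by
    have hdiff : ∀ x, HasDerivAt (fun x => φ x - C / 2 * Real.exp (2 * x)) 0 x := by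
      intro x
      have he : HasDerivAt (fun x : ℝ => Real.exp (2 * x)) (2 * Real.exp (2 * x)) x := by
        have : HasDerivAt (fun x : ℝ => 2 * x) (2 : ℝ) x := by
          simpa using (hasDerivAt_id x).const_mul 2
        simpa [mul_comm] using this.exp
      have := (hφderiv x).sub (he.const_mul (C / 2))
      have hz : ψ x - C / 2 * (2 * Real.exp (2 * x)) = 0 := by
        rw [hψeq x]; ring
      rwa [hz] at this
    have hconst : ∀ x, φ x - C / 2 * Real.exp (2 * x) = φ 0 - C / 2 := by
      intro x
      have := is_const_of_deriv_eq_zero (fun x => (hdiff x).differentiableAt)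
        (fun x => (hdiff x).deriv) x 0
      simpa using this
    intro x
    have := hconst x
    rw [hA]; linarith
  have hu : ∀ x, deriv H x * φ x = -(C * Real.exp (2 * x)) := by
    intro x
    have := hψeq x
    simp only [hψ, hφ] at *
    nlinarith [this]
  by_cases hAz : A = 0
  · left
    intro x
    have hφx := hφeq x
    rw [hAz, zero_add] at hφx
    have hCne : C ≠ 0 := by
      intro h
      have := hφpos x
      rw [hφx, h] at this
      simp at this
    have h := hu x
    rw [hφx] at h
    have hE : Real.exp (2 * x) ≠ 0 := Real.exp_ne_zero _
    have hfac : (deriv H x + 2) * (C / 2 * Real.exp (2 * x)) = 0 := by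
      linear_combination h
    rcases mul_eq_zero.mp hfac with h' | h'
    · linarith
    · exact absurd h' (by positivity)
  · right
    refine ⟨C / (2 * A), fun x _ => ?_⟩
    have hφx := hφeq x
    have hφne : φ x ≠ 0 := ne_of_gt (hφpos x)
    have hden : 1 + C / (2 * A) * Real.exp (2 * x) = φ x / A := by
      rw [hφx]; field_simp
    have hR : -(2 * (C / (2 * A)) * Real.exp (2 * x)) / (φ x / A)
        = -(C * Real.exp (2 * x)) / φ x := by
      field_simp
    rw [hden, hR, eq_div_iff hφne]
    exact hu x
end

section
/- Suppose a smooth function l(f_i, f_j) > 0 satisfies cosh l = cosh(f_j − f_i − C) + η e^{f_i+f_j} for constants C, η with the right-hand side > 1. Define tanh d_{ij} = ∂l/∂f_i and tanh d_{ji} = ∂l/∂f_j. Then cosh²d_{ij}/cosh²d_{ji} = e^{2f_i − 2f_j + 2C}. -/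
open Real

theorem stmt4 (C η : ℝ) (l dij dji : ℝ → ℝ → ℝ)
    (hsmooth : ContDiff ℝ (⊤ : ℕ∞) (fun p : ℝ × ℝ => l p.1 p.2))
    (hlpos : ∀ fi fj, 0 < l fi fj)
    (hrhs : ∀ fi fj, 1 < Real.cosh (fj - fi - C) + η * Real.exp (fi + fj))
    (hl : ∀ fi fj, Real.cosh (l fi fj)
        = Real.cosh (fj - fi - C) + η * Real.exp (fi + fj))
    (hdij : ∀ fi fj, Real.tanh (dij fi fj) = deriv (fun x => l x fj) fi)
    (hdji : ∀ fi fj, Real.tanh (dji fi fj) = deriv (fun y => l fi y) fj) :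
    ∀ fi fj, Real.cosh (dij fi fj) ^ 2 / Real.cosh (dji fi fj) ^ 2
      = Real.exp (2 * fi - 2 * fj + 2 * C) := by
  intro fi fj
  have hdiff : Differentiable ℝ (fun p : ℝ × ℝ => l p.1 p.2) :=
    hsmooth.differentiable (by simp)
  have hdi : DifferentiableAt ℝ (fun x => l x fj) fi :=
    by have h0 : DifferentiableAt ℝ (fun x : ℝ => (x, fj)) fi := differentiableAt_id.prodMk (differentiableAt_const fj); exact (hdiff (fi, fj)).comp fi h0
  have hdj : DifferentiableAt ℝ (fun y => l fi y) fj :=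
    by have h0 : DifferentiableAt ℝ (fun y : ℝ => (fi, y)) fj := (differentiableAt_const fi).prodMk differentiableAt_id; exact (hdiff (fi, fj)).comp fj h0
  set Li := deriv (fun x => l x fj) fi with hLi
  set Lj := deriv (fun y => l fi y) fj with hLj
  set u := fj - fi - C with hu
  set E := Real.exp (fi + fj) with hE
  -- derivative identities
  have h1 : deriv (fun x => Real.cosh (l x fj)) fi = Real.sinh (l fi fj) * Li := by
    have := ((Real.hasDerivAt_cosh (l fi fj)).comp fi hdi.hasDerivAt).deriv
    simpa [Function.comp_def, mul_comm] using this
  have hA : HasDerivAt (fun x : ℝ => fj - x - C) (-1) fi := by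
    simpa using ((hasDerivAt_id fi).const_sub fj).sub_const C
  have hEx : HasDerivAt (fun x : ℝ => η * Real.exp (x + fj)) (η * Real.exp (fi + fj)) fi := by
    have h := (Real.hasDerivAt_exp (fi + fj)).comp fi ((hasDerivAt_id fi).add_const fj)
    simpa using h.const_mul η
  have h1' : deriv (fun x => Real.cosh (fj - x - C) + η * Real.exp (x + fj)) fi
      = -Real.sinh u + η * E := by
    have hc := (Real.hasDerivAt_cosh (fj - fi - C)).comp fi hA
    have := (hc.add hEx).deriv
    simpa [hu, hE, mul_comm, Function.comp_def, Pi.add_def] using this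
  have heq1 : Real.sinh (l fi fj) * Li = -Real.sinh u + η * E := by
    rw [← h1, ← h1']
    congr 1
    funext x
    exact hl x fj
  have h2 : deriv (fun y => Real.cosh (l fi y)) fj = Real.sinh (l fi fj) * Lj := by
    have := ((Real.hasDerivAt_cosh (l fi fj)).comp fj hdj.hasDerivAt).deriv
    simpa [Function.comp_def, mul_comm] using this
  have hB : HasDerivAt (fun y : ℝ => y - fi - C) 1 fj := by
    simpa using ((hasDerivAt_id fj).sub_const fi).sub_const C
  have hEy : HasDerivAt (fun y : ℝ => η * Real.exp (fi + y)) (η * Real.exp (fi + fj)) fj := by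
    have h := (Real.hasDerivAt_exp (fi + fj)).comp fj ((hasDerivAt_id fj).const_add fi)
    simpa using h.const_mul η
  have h2' : deriv (fun y => Real.cosh (y - fi - C) + η * Real.exp (fi + y)) fj
      = Real.sinh u + η * E := by
    have hc := (Real.hasDerivAt_cosh (fj - fi - C)).comp fj hB
    have := (hc.add hEy).deriv
    simpa [hu, hE, mul_comm, Function.comp_def, Pi.add_def] using this
  have heq2 : Real.sinh (l fi fj) * Lj = Real.sinh u + η * E := by
    rw [← h2, ← h2']
    congr 1
    funext y
    exact hl fi y
  -- basic facts
  have hSpos : 0 < Real.sinh (l fi fj) := Real.sinh_pos_iff.2 (hlpos fi fj)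
  set S := Real.sinh (l fi fj) with hS
  have hS2 : S ^ 2 = (Real.cosh u + η * E) ^ 2 - 1 := by
    have := Real.sinh_sq (l fi fj)
    rw [hS, this, hl fi fj]
  have hcu : Real.cosh u ^ 2 = Real.sinh u ^ 2 + 1 := Real.cosh_sq u
  -- tanh facts
  have hdij' : Real.tanh (dij fi fj) = Li := hdij fi fj
  have hdji' : Real.tanh (dji fi fj) = Lj := hdji fi fj
  have htanh : ∀ x : ℝ, Real.tanh x ^ 2 < 1 := by
    intro x
    rw [Real.tanh_eq_sinh_div_cosh, div_pow, div_lt_one (by positivity)]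
    nlinarith [Real.cosh_sq x]
  have hLi1 : Li ^ 2 < 1 := by rw [← hdij']; exact htanh _
  have hLj1 : Lj ^ 2 < 1 := by rw [← hdji']; exact htanh _
  have hkey : ∀ x : ℝ, Real.cosh x ^ 2 * (1 - Real.tanh x ^ 2) = 1 := by
    intro x
    have hc := Real.cosh_pos x
    rw [Real.tanh_eq_sinh_div_cosh]
    have hc2 := Real.cosh_sq x
    field_simp
    linarith
  have hci : Real.cosh (dij fi fj) ^ 2 * (1 - Li ^ 2) = 1 := by
    rw [← hdij']; exact hkey _
  have hcj : Real.cosh (dji fi fj) ^ 2 * (1 - Lj ^ 2) = 1 := by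
    rw [← hdji']; exact hkey _
  -- key algebraic identities
  have hexpu : Real.cosh u + Real.sinh u = Real.exp u := Real.cosh_add_sinh u
  have hexpnu : Real.cosh u - Real.sinh u = Real.exp (-u) := Real.cosh_sub_sinh u
  have hSA : S ^ 2 * (1 - Li ^ 2) = 2 * (η * E) * Real.exp u := by
    have h : S ^ 2 - (S * Li) ^ 2 = 2 * (η * E) * (Real.cosh u + Real.sinh u) := by
      rw [heq1, hS2]; linear_combination hcu
    linear_combination h + 2 * (η * E) * hexpu
  have hSB : S ^ 2 * (1 - Lj ^ 2) = 2 * (η * E) * Real.exp (-u) := by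
    have h : S ^ 2 - (S * Lj) ^ 2 = 2 * (η * E) * (Real.cosh u - Real.sinh u) := by
      rw [heq2, hS2]; linear_combination hcu
    linear_combination h + 2 * (η * E) * hexpnu
  have hSpos2 : (0:ℝ) < S ^ 2 := by positivity
  have hpos1 : 0 < 2 * (η * E) * Real.exp u := by
    rw [← hSA]
    have : 0 < 1 - Li ^ 2 := by linarith
    positivity
  have hηEpos : 0 < 2 * (η * E) := by
    have he := Real.exp_pos u
    by_contra h
    push_neg at h
    nlinarith
  have hpos2 : 0 < 2 * (η * E) * Real.exp (-u) := by positivity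
  have e1 : Real.cosh (dij fi fj) ^ 2 = S ^ 2 / (2 * (η * E) * Real.exp u) := by
    rw [eq_div_iff (ne_of_gt hpos1), ← hSA]
    linear_combination S ^ 2 * hci
  have e2 : Real.cosh (dji fi fj) ^ 2 = S ^ 2 / (2 * (η * E) * Real.exp (-u)) := by
    rw [eq_div_iff (ne_of_gt hpos2), ← hSB]
    linear_combination S ^ 2 * hcj
  rw [e1, e2]
  have hratio : S ^ 2 / (2 * (η * E) * Real.exp u) / (S ^ 2 / (2 * (η * E) * Real.exp (-u)))
      = Real.exp (-u) / Real.exp u := by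
    rw [div_div_div_comm, div_self (ne_of_gt hSpos2),
      mul_div_mul_left _ _ (ne_of_gt hηEpos), one_div_div]
  rw [hratio, ← Real.exp_sub]
  congr 1
  rw [hu]; ring
end

section
/- Let l = l(f_i, f_j) be a smooth positive function with ∂(cosh l)/∂f_i = cosh l − c₄ e^{f_j − f_i} and ∂(cosh l)/∂f_j = cosh l − c₃ e^{f_i − f_j}, where c₃, c₄ > 0 are constants with c₃c₄ = 1. Then there exists a constant η such that cosh l = cosh(f_j − f_i − log c₃) + η e^{f_i + f_j}. -/
open Real

theorem stmt5 (c₃ c₄ : ℝ) (hc₃ : 0 < c₃) (hc₄ : 0 < c₄) (hcc : c₃ * c₄ = 1)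
    (l : ℝ → ℝ → ℝ)
    (hsmooth : ContDiff ℝ (⊤ : ℕ∞) (fun p : ℝ × ℝ => l p.1 p.2))
    (hlpos : ∀ fi fj, 0 < l fi fj)
    (h1 : ∀ fi fj, deriv (fun x => Real.cosh (l x fj)) fi
        = Real.cosh (l fi fj) - c₄ * Real.exp (fj - fi))
    (h2 : ∀ fi fj, deriv (fun y => Real.cosh (l fi y)) fj
        = Real.cosh (l fi fj) - c₃ * Real.exp (fi - fj)) :
    ∃ η : ℝ, ∀ fi fj, Real.cosh (l fi fj)
      = Real.cosh (fj - fi - Real.log c₃) + η * Real.exp (fi + fj) := by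
  have hc₄' : c₄ = 1 / c₃ := by field_simp; linarith [hcc]
  have hdl : Differentiable ℝ (fun p : ℝ × ℝ => l p.1 p.2) := hsmooth.differentiable (by simp)
  have hd1 : ∀ fj, Differentiable ℝ (fun x => Real.cosh (l x fj)) := by
    intro fj
    exact Real.differentiable_cosh.comp (hdl.comp (differentiable_id.prodMk (differentiable_const fj)))
  have hd2 : ∀ fi, Differentiable ℝ (fun y => Real.cosh (l fi y)) := by
    intro fi
    exact Real.differentiable_cosh.comp (hdl.comp ((differentiable_const fi).prodMk differentiable_id))
  -- constancy in the first variable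
  have key1 : ∀ fj fi, (Real.cosh (l fi fj) - Real.cosh (fj - fi - Real.log c₃)) * Real.exp (-fi)
      = (Real.cosh (l 0 fj) - Real.cosh (fj - 0 - Real.log c₃)) * Real.exp (-(0:ℝ)) := by
    intro fj
    set G : ℝ → ℝ := fun t => (Real.cosh (l t fj) - Real.cosh (fj - t - Real.log c₃)) * Real.exp (-t) with hGdef
    have hG : ∀ x, HasDerivAt G 0 x := by
      intro x
      have hf : HasDerivAt (fun t => Real.cosh (l t fj))
          (Real.cosh (l x fj) - c₄ * Real.exp (fj - x)) x := by
        have := ((hd1 fj) x).hasDerivAt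
        rwa [h1 x fj] at this
      have hi : HasDerivAt (fun t => fj - t - Real.log c₃) (-1) x := by
        simpa using ((hasDerivAt_id x).const_sub fj).sub_const (Real.log c₃)
      have hcsh : HasDerivAt (fun t => Real.cosh (fj - t - Real.log c₃))
          (Real.sinh (fj - x - Real.log c₃) * (-1)) x := hi.cosh
      have he : HasDerivAt (fun t => Real.exp (-t)) (Real.exp (-x) * (-1)) x :=
        ((hasDerivAt_id x).neg.exp).congr_deriv (by simp)
      have h := (hf.sub hcsh).mul he
      refine h.congr_deriv ?_
      simp only [Pi.sub_apply]
      have hsum : Real.sinh (fj - x - Real.log c₃) + Real.cosh (fj - x - Real.log c₃)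
          = c₄ * Real.exp (fj - x) := by
        rw [Real.sinh_add_cosh, show fj - x - Real.log c₃ = (fj - x) + (-Real.log c₃) by ring,
          Real.exp_add, Real.exp_neg, Real.exp_log hc₃, hc₄']
        ring
      linear_combination (Real.exp (-x)) * hsum
    have hDiff : Differentiable ℝ G := fun x => (hG x).differentiableAt
    have hDeriv : ∀ x, deriv G x = 0 := fun x => (hG x).deriv
    intro fi
    exact is_const_of_deriv_eq_zero hDiff hDeriv fi 0
  -- constancy in the second variable
  have key2 : ∀ fi fj, (Real.cosh (l fi fj) - Real.cosh (fj - fi - Real.log c₃)) * Real.exp (-fj)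
      = (Real.cosh (l fi 0) - Real.cosh (0 - fi - Real.log c₃)) * Real.exp (-(0:ℝ)) := by
    intro fi
    set G : ℝ → ℝ := fun t => (Real.cosh (l fi t) - Real.cosh (t - fi - Real.log c₃)) * Real.exp (-t) with hGdef
    have hG : ∀ y, HasDerivAt G 0 y := by
      intro y
      have hf : HasDerivAt (fun t => Real.cosh (l fi t))
          (Real.cosh (l fi y) - c₃ * Real.exp (fi - y)) y := by
        have := ((hd2 fi) y).hasDerivAt
        rwa [h2 fi y] at this
      have hi : HasDerivAt (fun t => t - fi - Real.log c₃) 1 y := by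
        simpa using ((hasDerivAt_id y).sub_const fi).sub_const (Real.log c₃)
      have hcsh : HasDerivAt (fun t => Real.cosh (t - fi - Real.log c₃))
          (Real.sinh (y - fi - Real.log c₃) * 1) y := hi.cosh
      have he : HasDerivAt (fun t => Real.exp (-t)) (Real.exp (-y) * (-1)) y :=
        ((hasDerivAt_id y).neg.exp).congr_deriv (by simp)
      have h := (hf.sub hcsh).mul he
      refine h.congr_deriv ?_
      simp only [Pi.sub_apply]
      have hsum : Real.cosh (y - fi - Real.log c₃) - Real.sinh (y - fi - Real.log c₃)
          = c₃ * Real.exp (fi - y) := by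
        rw [Real.cosh_sub_sinh, show -(y - fi - Real.log c₃) = (fi - y) + Real.log c₃ by ring,
          Real.exp_add, Real.exp_log hc₃]
        ring
      linear_combination (Real.exp (-y)) * hsum
    have hDiff : Differentiable ℝ G := fun y => (hG y).differentiableAt
    have hDeriv : ∀ y, deriv G y = 0 := fun y => (hG y).deriv
    intro fj
    exact is_const_of_deriv_eq_zero hDiff hDeriv fj 0
  refine ⟨Real.cosh (l 0 0) - Real.cosh (0 - 0 - Real.log c₃), fun fi fj => ?_⟩
  have hfi := key1 fj fi
  have hfj := key2 0 fj
  have e1 : Real.exp fi ≠ 0 := Real.exp_ne_zero _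
  have e2 : Real.exp fj ≠ 0 := Real.exp_ne_zero _
  rw [Real.exp_add]
  simp only [neg_zero, Real.exp_zero, mul_one, Real.exp_neg] at hfi hfj
  field_simp at hfi hfj
  simp only [sub_self, mul_zero, zero_sub, Real.cosh_neg] at hfj
  simp only [show (0:ℝ) - 0 - Real.log c₃ = -Real.log c₃ by ring, Real.cosh_neg]
  linear_combination hfi + Real.exp fi * hfj
end

section
/- Let F = F(f_i, f_j) be a smooth function satisfying ∂F/∂f_i = F − √((1 − a_j e^{2f_j})/(1 − a_i e^{2f_i})) and ∂F/∂f_j = F − √((1 − a_i e^{2f_i})/(1 − a_j e^{2f_j})), on a domain where 1 − a_i e^{2f_i} > 0 and 1 − a_j e^{2f_j} > 0, where a_i, a_j are constants. Then there exists a constant η such that F = √((1 − a_i e^{2f_i})(1 − a_j e^{2f_j})) − η e^{f_i + f_j}. -/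
open Real

lemma convexI (a : ℝ) : Convex ℝ {t : ℝ | 0 < 1 - a * Real.exp (2 * t)} := by
  rcases le_or_gt a 0 with h | h
  · have : {t : ℝ | 0 < 1 - a * Real.exp (2 * t)} = Set.univ := by
      ext t
      simp only [Set.mem_setOf_eq, Set.mem_univ, iff_true]
      nlinarith [Real.exp_pos (2 * t)]
    rw [this]; exact convex_univ
  · have : {t : ℝ | 0 < 1 - a * Real.exp (2 * t)} = Set.Iio (Real.log (1 / a) / 2) := by
      ext t
      simp only [Set.mem_setOf_eq, Set.mem_Iio]
      rw [sub_pos, mul_comm, ← lt_div_iff₀ h, ← Real.lt_log_iff_exp_lt (by positivity)]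
      constructor <;> intro <;> linarith
    rw [this]; exact convex_Iio _

lemma openI (a : ℝ) : IsOpen {t : ℝ | 0 < 1 - a * Real.exp (2 * t)} := by
  apply isOpen_lt continuous_const
  fun_prop

lemma nonemptyI (a : ℝ) : ∃ t : ℝ, 0 < 1 - a * Real.exp (2 * t) := by
  rcases le_or_gt a 0 with h | h
  · exact ⟨0, by nlinarith [Real.exp_pos (2 * (0:ℝ))]⟩
  · refine ⟨Real.log (1 / a) / 2 - 1, ?_⟩
    have h2 : 2 * (Real.log (1 / a) / 2 - 1) = Real.log (1 / a) + (-2) := by ring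
    rw [h2, Real.exp_add, Real.exp_log (by positivity)]
    have hlt : Real.exp (-2) < 1 := Real.exp_lt_one_iff.2 (by norm_num)
    have : a * (1 / a * Real.exp (-2)) = Real.exp (-2) := by field_simp
    rw [this]; linarith

lemma keyDeriv (a B c : ℝ) (Φ : ℝ → ℝ) (t : ℝ)
    (hA : 0 < 1 - a * Real.exp (2 * t)) (hB : 0 < B)
    (hΦ : DifferentiableAt ℝ Φ t)
    (hd : deriv Φ t = Φ t - Real.sqrt (B / (1 - a * Real.exp (2 * t)))) :
    HasDerivAt (fun x => (Φ x - Real.sqrt ((1 - a * Real.exp (2 * x)) * B)) *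
      Real.exp (-(x + c))) 0 t := by
  set A : ℝ := 1 - a * Real.exp (2 * t) with hAdef
  set s : ℝ := Real.sqrt (A * B) with hsdef
  set r : ℝ := Real.sqrt (B / A) with hrdef
  have hAB : 0 < A * B := mul_pos hA hB
  have hs : 0 < s := Real.sqrt_pos.2 hAB
  have hs2 : s ^ 2 = A * B := Real.sq_sqrt hAB.le
  have hrs : r * s = B := by
    rw [hrdef, hsdef, ← Real.sqrt_mul (by positivity)]
    rw [show B / A * (A * B) = B ^ 2 by field_simp]
    exact Real.sqrt_sq hB.le
  have hAder : HasDerivAt (fun x => 1 - a * Real.exp (2 * x))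
      (-(a * (Real.exp (2 * t) * 2))) t := by
    have h2x : HasDerivAt (fun x : ℝ => 2 * x) 2 t := by
      simpa using (hasDerivAt_id t).const_mul 2
    have := (h2x.exp).const_mul a
    exact this.const_sub 1
  have hu : HasDerivAt (fun x => (1 - a * Real.exp (2 * x)) * B)
      ((-(a * (Real.exp (2 * t) * 2))) * B) t := hAder.mul_const B
  have hsq : HasDerivAt (fun x => Real.sqrt ((1 - a * Real.exp (2 * x)) * B))
      ((-(a * (Real.exp (2 * t) * 2))) * B / (2 * s)) t :=
    hu.sqrt (by simpa [hsdef] using hAB.ne')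
  have hSder : (-(a * (Real.exp (2 * t) * 2))) * B / (2 * s) = s - r := by
    have hA1 : -(a * Real.exp (2 * t)) = A - 1 := by rw [hAdef]; ring
    have : (-(a * (Real.exp (2 * t) * 2))) * B = 2 * ((A - 1) * B) := by
      rw [← hA1]; ring
    rw [this]
    rw [show (A - 1) * B = s ^ 2 - r * s by rw [hs2, hrs]; ring]
    field_simp
  have hΦd : HasDerivAt Φ (Φ t - r) t := by
    have := hΦ.hasDerivAt
    rwa [hd] at this
  have hdiff : HasDerivAt (fun x => Φ x - Real.sqrt ((1 - a * Real.exp (2 * x)) * B))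
      (Φ t - s) t := by
    have h := hΦd.sub hsq
    rw [hSder] at h
    rw [sub_sub_sub_cancel_right] at h
    exact h
  have hexp : HasDerivAt (fun x : ℝ => Real.exp (-(x + c))) (-Real.exp (-(t + c))) t := by
    have h1 : HasDerivAt (fun x : ℝ => -(x + c)) (-1) t := by
      exact ((hasDerivAt_id t).add_const c).neg
    simpa using h1.exp
  have := hdiff.mul hexp
  have hfin : (Φ t - s) * Real.exp (-(t + c)) +
      (Φ t - Real.sqrt ((1 - a * Real.exp (2 * t)) * B)) * -Real.exp (-(t + c)) = 0 := by
    rw [← hsdef]; ring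
  rw [hfin] at this
  exact this

theorem stmt6 (ai aj : ℝ) (F : ℝ → ℝ → ℝ)
    (hsmooth : ContDiff ℝ (⊤ : ℕ∞) (fun p : ℝ × ℝ => F p.1 p.2))
    (h1 : ∀ fi fj, 0 < 1 - ai * Real.exp (2 * fi) → 0 < 1 - aj * Real.exp (2 * fj) →
        deriv (fun x => F x fj) fi
          = F fi fj - Real.sqrt ((1 - aj * Real.exp (2 * fj)) / (1 - ai * Real.exp (2 * fi))))
    (h2 : ∀ fi fj, 0 < 1 - ai * Real.exp (2 * fi) → 0 < 1 - aj * Real.exp (2 * fj) →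
        deriv (fun y => F fi y) fj
          = F fi fj - Real.sqrt ((1 - ai * Real.exp (2 * fi)) / (1 - aj * Real.exp (2 * fj)))) :
    ∃ η : ℝ, ∀ fi fj, 0 < 1 - ai * Real.exp (2 * fi) → 0 < 1 - aj * Real.exp (2 * fj) →
      F fi fj = Real.sqrt ((1 - ai * Real.exp (2 * fi)) * (1 - aj * Real.exp (2 * fj)))
        - η * Real.exp (fi + fj) := by
  have hF : Differentiable ℝ (fun p : ℝ × ℝ => F p.1 p.2) := hsmooth.differentiable (by simp)
  have hFi : ∀ fj, Differentiable ℝ (fun x => F x fj) := fun fj =>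
    hF.comp (differentiable_id.prodMk (differentiable_const fj))
  have hFj : ∀ fi, Differentiable ℝ (fun y => F fi y) := fun fi =>
    hF.comp ((differentiable_const fi).prodMk differentiable_id)
  set G : ℝ × ℝ → ℝ := fun p =>
    (F p.1 p.2 - Real.sqrt ((1 - ai * Real.exp (2 * p.1)) * (1 - aj * Real.exp (2 * p.2)))) *
      Real.exp (-(p.1 + p.2)) with hGdef
  set D : Set (ℝ × ℝ) :=
    {t : ℝ | 0 < 1 - ai * Real.exp (2 * t)} ×ˢ {t : ℝ | 0 < 1 - aj * Real.exp (2 * t)} with hDdef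
  have hDconv : Convex ℝ D := (convexI ai).prod (convexI aj)
  have hDopen : IsOpen D := (openI ai).prod (openI aj)
  have hGdiff : ∀ p ∈ D, DifferentiableAt ℝ G p := by
    intro p hp
    have hp1 : 0 < 1 - ai * Real.exp (2 * p.1) := hp.1
    have hp2 : 0 < 1 - aj * Real.exp (2 * p.2) := hp.2
    have hinner : DifferentiableAt ℝ
        (fun p : ℝ × ℝ => (1 - ai * Real.exp (2 * p.1)) * (1 - aj * Real.exp (2 * p.2))) p := by
      fun_prop
    have hsqrt := hinner.sqrt (ne_of_gt (mul_pos hp1 hp2))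
    have hexp : DifferentiableAt ℝ (fun p : ℝ × ℝ => Real.exp (-(p.1 + p.2))) p := by fun_prop
    exact (hF.differentiableAt.sub hsqrt).mul hexp
  -- partial derivatives of G vanish on D
  have hDi : ∀ fi fj, 0 < 1 - ai * Real.exp (2 * fi) → 0 < 1 - aj * Real.exp (2 * fj) →
      HasDerivAt (fun x => G (x, fj)) 0 fi := by
    intro fi fj hi hj
    exact keyDeriv ai (1 - aj * Real.exp (2 * fj)) fj (fun x => F x fj) fi hi hj
      ((hFi fj).differentiableAt) (h1 fi fj hi hj)
  have hDj : ∀ fi fj, 0 < 1 - ai * Real.exp (2 * fi) → 0 < 1 - aj * Real.exp (2 * fj) →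
      HasDerivAt (fun y => G (fi, y)) 0 fj := by
    intro fi fj hi hj
    have hk := keyDeriv aj (1 - ai * Real.exp (2 * fi)) fi (fun y => F fi y) fj hj hi
      ((hFj fi).differentiableAt) (h2 fi fj hi hj)
    have heq : (fun y => (F fi y -
        Real.sqrt ((1 - aj * Real.exp (2 * y)) * (1 - ai * Real.exp (2 * fi)))) *
        Real.exp (-(y + fi))) = fun y => G (fi, y) := by
      funext y
      rw [hGdef]
      simp only
      rw [mul_comm (1 - aj * Real.exp (2 * y)) (1 - ai * Real.exp (2 * fi)), add_comm y fi]
    rwa [heq] at hk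
  have hfderiv : ∀ p ∈ D, fderiv ℝ G p = 0 := by
    intro p hp
    have hG := hGdiff p hp
    have hline1 : HasDerivAt (fun x : ℝ => (x, p.2)) ((1:ℝ), (0:ℝ)) p.1 :=
      (hasDerivAt_id p.1).prodMk (hasDerivAt_const p.1 p.2)
    have hx : HasDerivAt (fun x => G (x, p.2)) (fderiv ℝ G p ((1:ℝ), (0:ℝ))) p.1 := by
      exact hG.hasFDerivAt.comp_hasDerivAt p.1 hline1
    have h10 : fderiv ℝ G p ((1:ℝ), (0:ℝ)) = 0 := hx.unique (hDi p.1 p.2 hp.1 hp.2)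
    have hline2 : HasDerivAt (fun y : ℝ => (p.1, y)) ((0:ℝ), (1:ℝ)) p.2 :=
      (hasDerivAt_const p.2 p.1).prodMk (hasDerivAt_id p.2)
    have hy : HasDerivAt (fun y => G (p.1, y)) (fderiv ℝ G p ((0:ℝ), (1:ℝ))) p.2 := by
      exact hG.hasFDerivAt.comp_hasDerivAt p.2 hline2
    have h01 : fderiv ℝ G p ((0:ℝ), (1:ℝ)) = 0 := hy.unique (hDj p.1 p.2 hp.1 hp.2)
    apply ContinuousLinearMap.ext
    intro v
    have hv : v = v.1 • ((1:ℝ), (0:ℝ)) + v.2 • ((0:ℝ), (1:ℝ)) := by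
      apply Prod.ext <;> simp
    rw [hv, map_add, map_smul, map_smul, h10, h01]
    simp
  obtain ⟨t1, ht1⟩ := nonemptyI ai
  obtain ⟨t2, ht2⟩ := nonemptyI aj
  have hp0 : ((t1, t2) : ℝ × ℝ) ∈ D := ⟨ht1, ht2⟩
  refine ⟨-(G (t1, t2)), ?_⟩
  intro fi fj hi hj
  have hmem : ((fi, fj) : ℝ × ℝ) ∈ D := ⟨hi, hj⟩
  have hconst : G (fi, fj) = G (t1, t2) := by
    apply hDconv.is_const_of_fderivWithin_eq_zero
      (fun p hp => (hGdiff p hp).differentiableWithinAt)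
      (fun p hp => by rw [fderivWithin_of_isOpen hDopen hp]; exact hfderiv p hp) hmem hp0
  have hkey : (F fi fj -
      Real.sqrt ((1 - ai * Real.exp (2 * fi)) * (1 - aj * Real.exp (2 * fj)))) *
      Real.exp (-(fi + fj)) = G (t1, t2) := hconst
  have h3 := congrArg (· * Real.exp (fi + fj)) hkey
  rw [mul_assoc, ← Real.exp_add, show -(fi + fj) + (fi + fj) = 0 by ring,
    Real.exp_zero, mul_one] at h3
  linarith
end

section
/- Let F = F(f_i, f_j) be a smooth function satisfying ∂F/∂f_i = F + √((1 − a_j e^{2f_j})/(1 − a_i e^{2f_i})) and ∂F/∂f_j = F + √((1 − a_i e^{2f_i})/(1 − a_j e^{2f_j})), on a domain where 1 − a_i e^{2f_i} > 0 and 1 − a_j e^{2f_j} > 0, for constants a_i, a_j. Then there exists a constant η such that F = −√((1 − a_i e^{2f_i})(1 − a_j e^{2f_j})) + η e^{f_i + f_j}. -/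
open Real

/-- derivative of x ↦ √(1 - a e^{2x}) -/
lemma sqrt_hasDeriv (a x : ℝ) (h : 0 < 1 - a * Real.exp (2 * x)) :
    HasDerivAt (fun x => Real.sqrt (1 - a * Real.exp (2 * x)))
      (Real.sqrt (1 - a * Real.exp (2 * x)) - 1 / Real.sqrt (1 - a * Real.exp (2 * x))) x := by
  have hinner : HasDerivAt (fun x => 1 - a * Real.exp (2 * x))
      (-(a * (Real.exp (2 * x) * 2))) x := by
    have he : HasDerivAt (fun x : ℝ => Real.exp (2 * x)) (Real.exp (2 * x) * 2) x := by
      simpa [Function.comp_def] using (Real.hasDerivAt_exp (2 * x)).comp x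
        ((hasDerivAt_id x).const_mul 2)
    simpa using (he.const_mul a).const_sub 1
  have hs := hinner.sqrt (ne_of_gt h)
  have hA : Real.sqrt (1 - a * Real.exp (2 * x)) ^ 2 = 1 - a * Real.exp (2 * x) :=
    Real.sq_sqrt h.le
  have hApos : 0 < Real.sqrt (1 - a * Real.exp (2 * x)) := Real.sqrt_pos.mpr h
  convert hs using 1
  field_simp
  nlinarith [hA, hApos]

/-- nonempty domain -/
lemma exists_dom (a : ℝ) : ∃ x : ℝ, 0 < 1 - a * Real.exp (2 * x) := by
  refine ⟨-(Real.log (|a| + 1) + 1) / 2, ?_⟩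
  have h1 : (0:ℝ) < |a| + 1 := by positivity
  have h2 : a * Real.exp (2 * (-(Real.log (|a| + 1) + 1) / 2)) < 1 := by
    have heq : 2 * (-(Real.log (|a| + 1) + 1) / 2) = -(Real.log (|a| + 1) + 1) := by ring
    rw [heq]
    have hlt : Real.exp (-(Real.log (|a| + 1) + 1)) < (|a| + 1)⁻¹ := by
      have : Real.exp (-Real.log (|a| + 1)) = (|a| + 1)⁻¹ := by
        rw [Real.exp_neg, Real.exp_log h1]
      rw [← this]
      exact Real.exp_lt_exp.mpr (by linarith)
    calc a * Real.exp (-(Real.log (|a| + 1) + 1))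
        ≤ |a| * Real.exp (-(Real.log (|a| + 1) + 1)) :=
          mul_le_mul_of_nonneg_right (le_abs_self a) (Real.exp_pos _).le
      _ ≤ |a| * (|a| + 1)⁻¹ := mul_le_mul_of_nonneg_left hlt.le (abs_nonneg a)
      _ < 1 := by
          rw [mul_inv_lt_iff₀ h1]
          linarith [abs_nonneg a]
  linarith

/-- convexity of the domain -/
lemma dom_convex (a : ℝ) : Convex ℝ {x : ℝ | 0 < 1 - a * Real.exp (2 * x)} := by
  rw [convex_iff_ordConnected]
  constructor
  intro x hx y hy z hz
  simp only [Set.mem_setOf_eq] at *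
  rcases le_or_gt a 0 with ha | ha
  · nlinarith [Real.exp_pos (2 * z)]
  · have : Real.exp (2 * z) ≤ Real.exp (2 * y) :=
      Real.exp_le_exp.mpr (by linarith [hz.2])
    nlinarith

/-- constancy in the first variable -/
lemma const_dir (a b : ℝ) (G : ℝ → ℝ → ℝ)
    (hsmooth : ContDiff ℝ (⊤ : ℕ∞) (fun p : ℝ × ℝ => G p.1 p.2))
    (hd : ∀ x y, 0 < 1 - a * Real.exp (2 * x) → 0 < 1 - b * Real.exp (2 * y) →
        deriv (fun x => G x y) x
          = G x y + Real.sqrt ((1 - b * Real.exp (2 * y)) / (1 - a * Real.exp (2 * x))))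
    (y : ℝ) (hy : 0 < 1 - b * Real.exp (2 * y))
    (x₁ x₂ : ℝ) (hx₁ : 0 < 1 - a * Real.exp (2 * x₁)) (hx₂ : 0 < 1 - a * Real.exp (2 * x₂)) :
    (G x₁ y + Real.sqrt (1 - a * Real.exp (2 * x₁)) * Real.sqrt (1 - b * Real.exp (2 * y)))
        * Real.exp (-x₁)
      = (G x₂ y + Real.sqrt (1 - a * Real.exp (2 * x₂)) * Real.sqrt (1 - b * Real.exp (2 * y)))
        * Real.exp (-x₂) := by
  set S : Set ℝ := {x : ℝ | 0 < 1 - a * Real.exp (2 * x)} with hS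
  have hSopen : IsOpen S := by
    have : Continuous fun x : ℝ => 1 - a * Real.exp (2 * x) := by continuity
    exact isOpen_lt continuous_const this
  set φ : ℝ → ℝ := fun x =>
    (G x y + Real.sqrt (1 - a * Real.exp (2 * x)) * Real.sqrt (1 - b * Real.exp (2 * y)))
      * Real.exp (-x) with hφ
  have key : ∀ x ∈ S, HasDerivAt φ 0 x := by
    intro x hx
    have hxA : 0 < 1 - a * Real.exp (2 * x) := hx
    set A := 1 - a * Real.exp (2 * x) with hA
    set B := 1 - b * Real.exp (2 * y) with hB
    have hsA : 0 < Real.sqrt A := Real.sqrt_pos.mpr hxA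
    have hG : DifferentiableAt ℝ (fun x => G x y) x := by
      have : (fun x => G x y) = (fun p : ℝ × ℝ => G p.1 p.2) ∘ (fun x => (x, y)) := rfl
      rw [this]
      exact ((hsmooth.differentiable (by simp)) (x, y)).comp x
        (differentiableAt_id.prodMk (differentiableAt_const y))
    have hGd : HasDerivAt (fun x => G x y) (G x y + Real.sqrt (B / A)) x := by
      have := hG.hasDerivAt
      rwa [hd x y hxA hy] at this
    have hsq := (sqrt_hasDeriv a x hxA).mul_const (Real.sqrt B)
    have hsum := hGd.add hsq
    have hexp : HasDerivAt (fun x : ℝ => Real.exp (-x)) (-Real.exp (-x)) x := by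
      simpa [Function.comp_def] using (Real.hasDerivAt_exp (-x)).comp x (hasDerivAt_id x).neg
    have hprod := hsum.mul hexp
    refine hprod.congr_deriv ?_
    simp only [Pi.add_apply]
    have hdiv : Real.sqrt (B / A) = Real.sqrt B / Real.sqrt A := Real.sqrt_div hy.le A
    rw [hdiv]
    ring
  have hdiff : DifferentiableOn ℝ φ S := fun x hx =>
    ((key x hx).differentiableAt).differentiableWithinAt
  have hzero : ∀ x ∈ S, fderivWithin ℝ φ S x = 0 := by
    intro x hx
    rw [fderivWithin_of_isOpen hSopen hx, (key x hx).hasFDerivAt.fderiv]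
    ext v
    simp
  exact (dom_convex a).is_const_of_fderivWithin_eq_zero hdiff hzero hx₁ hx₂

theorem stmt7 (ai aj : ℝ) (F : ℝ → ℝ → ℝ)
    (hsmooth : ContDiff ℝ (⊤ : ℕ∞) (fun p : ℝ × ℝ => F p.1 p.2))
    (h1 : ∀ fi fj, 0 < 1 - ai * Real.exp (2 * fi) → 0 < 1 - aj * Real.exp (2 * fj) →
        deriv (fun x => F x fj) fi
          = F fi fj + Real.sqrt ((1 - aj * Real.exp (2 * fj)) / (1 - ai * Real.exp (2 * fi))))
    (h2 : ∀ fi fj, 0 < 1 - ai * Real.exp (2 * fi) → 0 < 1 - aj * Real.exp (2 * fj) →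
        deriv (fun y => F fi y) fj
          = F fi fj + Real.sqrt ((1 - ai * Real.exp (2 * fi)) / (1 - aj * Real.exp (2 * fj)))) :
    ∃ η : ℝ, ∀ fi fj, 0 < 1 - ai * Real.exp (2 * fi) → 0 < 1 - aj * Real.exp (2 * fj) →
      F fi fj = -Real.sqrt ((1 - ai * Real.exp (2 * fi)) * (1 - aj * Real.exp (2 * fj)))
        + η * Real.exp (fi + fj) := by
  obtain ⟨x₀, hx₀⟩ := exists_dom ai
  obtain ⟨y₀, hy₀⟩ := exists_dom aj
  set sA : ℝ → ℝ := fun x => Real.sqrt (1 - ai * Real.exp (2 * x)) with hsA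
  set sB : ℝ → ℝ := fun y => Real.sqrt (1 - aj * Real.exp (2 * y)) with hsB
  refine ⟨(F x₀ y₀ + sA x₀ * sB y₀) * Real.exp (-x₀) * Real.exp (-y₀), ?_⟩
  intro fi fj hfi hfj
  -- step 1: vary first variable
  have step1 := const_dir ai aj F hsmooth h1 fj hfj fi x₀ hfi hx₀
  -- step 2: vary second variable (swap)
  have hswap : ContDiff ℝ (⊤ : ℕ∞) (fun p : ℝ × ℝ => F p.2 p.1) :=
    hsmooth.comp (contDiff_snd.prodMk contDiff_fst)
  have step2 := const_dir aj ai (fun y x => F x y) hswap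
    (fun y x hby hax => h2 x y hax hby) x₀ hx₀ fj y₀ hfj hy₀
  -- combine
  have hrw : Real.sqrt ((1 - ai * Real.exp (2 * fi)) * (1 - aj * Real.exp (2 * fj)))
      = sA fi * sB fj := Real.sqrt_mul hfi.le _
  rw [hrw]
  have e1 : (F fi fj + sA fi * sB fj) * Real.exp (-fi)
      = (F x₀ fj + sA x₀ * sB fj) * Real.exp (-x₀) := step1
  have e2 : (F x₀ fj + sB fj * sA x₀) * Real.exp (-fj)
      = (F x₀ y₀ + sB y₀ * sA x₀) * Real.exp (-y₀) := step2
  have hne : ∀ t : ℝ, Real.exp (-t) ≠ 0 := fun t => (Real.exp_pos _).ne'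
  have key : F fi fj + sA fi * sB fj
      = (F x₀ y₀ + sA x₀ * sB y₀) * Real.exp (-x₀) * Real.exp (-y₀) * Real.exp (fi + fj) := by
    have h3 : F fi fj + sA fi * sB fj
        = (F x₀ fj + sA x₀ * sB fj) * Real.exp (-x₀) * Real.exp fi := by
      have := congrArg (· * Real.exp fi) e1
      simpa [mul_assoc, ← Real.exp_add] using this
    have h4 : F x₀ fj + sA x₀ * sB fj
        = (F x₀ y₀ + sA x₀ * sB y₀) * Real.exp (-y₀) * Real.exp fj := by
      have := congrArg (· * Real.exp fj) e2
      simp only [mul_comm (sB fj) (sA x₀), mul_comm (sB y₀) (sA x₀)] at this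
      simpa [mul_assoc, ← Real.exp_add] using this
    rw [h3, h4, Real.exp_add]
    ring
  linarith [key]
end

section
/- Suppose smooth functions d_{ij}(f_i, f_j) and d_{ji}(f_i, f_j) satisfy (1/cos²d_{ij})·∂d_{ij}/∂f_j = (1/cos²d_{ji})·∂d_{ji}/∂f_i, and ∂(d_{ij}+d_{ji})/∂f_i = tan d_{ij}, ∂(d_{ij}+d_{ji})/∂f_j = tan d_{ji}. Let H = log(cos²d_{ij}/cos²d_{ji}) (assuming both cosines positive). Then e^H·∂H/∂f_i + ∂H/∂f_j = 2(e^H − 1). -/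
open Real

theorem stmt17 (dij dji : ℝ → ℝ → ℝ)
    (hsij : ContDiff ℝ (⊤ : ℕ∞) (fun p : ℝ × ℝ => dij p.1 p.2))
    (hsji : ContDiff ℝ (⊤ : ℕ∞) (fun p : ℝ × ℝ => dji p.1 p.2))
    (hpos : ∀ fi fj, 0 < Real.cos (dij fi fj) ∧ 0 < Real.cos (dji fi fj))
    (hsym : ∀ fi fj, (1 / Real.cos (dij fi fj) ^ 2) * deriv (fun y => dij fi y) fj
        = (1 / Real.cos (dji fi fj) ^ 2) * deriv (fun x => dji x fj) fi)
    (hi : ∀ fi fj, deriv (fun x => dij x fj + dji x fj) fi = Real.tan (dij fi fj))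
    (hj : ∀ fi fj, deriv (fun y => dij fi y + dji fi y) fj = Real.tan (dji fi fj))
    (H : ℝ → ℝ → ℝ)
    (hH : ∀ fi fj, H fi fj
        = Real.log (Real.cos (dij fi fj) ^ 2 / Real.cos (dji fi fj) ^ 2)) :
    ∀ fi fj, Real.exp (H fi fj) * deriv (fun x => H x fj) fi
        + deriv (fun y => H fi y) fj
      = 2 * (Real.exp (H fi fj) - 1) := by
  intro fi fj
  obtain ⟨hA, hB⟩ := hpos fi fj
  have hdij := hsij.differentiable (by simp)
  have hdji := hsji.differentiable (by simp)
  have hcurve1 : Differentiable ℝ (fun x : ℝ => (x, fj)) :=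
    differentiable_id.prodMk (differentiable_const fj)
  have hcurve2 : Differentiable ℝ (fun y : ℝ => (fi, y)) :=
    (differentiable_const fi).prodMk differentiable_id
  have hij_i : DifferentiableAt ℝ (fun x => dij x fj) fi :=
    (hdij.comp hcurve1) fi
  have hji_i : DifferentiableAt ℝ (fun x => dji x fj) fi :=
    (hdji.comp hcurve1) fi
  have hij_j : DifferentiableAt ℝ (fun y => dij fi y) fj :=
    (hdij.comp hcurve2) fj
  have hji_j : DifferentiableAt ℝ (fun y => dji fi y) fj :=
    (hdji.comp hcurve2) fj
  set a := deriv (fun x => dij x fj) fi with ha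
  set b := deriv (fun x => dji x fj) fi with hb
  set c := deriv (fun y => dij fi y) fj with hc
  set e := deriv (fun y => dji fi y) fj with he
  set A := dij fi fj with hAdef
  set B := dji fi fj with hBdef
  have hsum_i : a + b = Real.tan A := by
    rw [ha, hb, ← deriv_add hij_i hji_i]
    exact hi fi fj
  have hsum_j : c + e = Real.tan B := by
    rw [hc, he, ← deriv_add hij_j hji_j]
    exact hj fi fj
  have hsymm : (1 / Real.cos A ^ 2) * c = (1 / Real.cos B ^ 2) * b := hsym fi fj
  have hcA2 : Real.cos A ^ 2 ≠ 0 := pow_ne_zero _ (ne_of_gt hA)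
  have hcB2 : Real.cos B ^ 2 ≠ 0 := pow_ne_zero _ (ne_of_gt hB)
  -- rewrite H as difference of logs
  have hHx : (fun x => H x fj) = fun x =>
      Real.log (Real.cos (dij x fj) ^ 2) - Real.log (Real.cos (dji x fj) ^ 2) := by
    funext x
    obtain ⟨h1, h2⟩ := hpos x fj
    rw [hH, Real.log_div (pow_ne_zero _ (ne_of_gt h1)) (pow_ne_zero _ (ne_of_gt h2))]
  have hHy : (fun y => H fi y) = fun y =>
      Real.log (Real.cos (dij fi y) ^ 2) - Real.log (Real.cos (dji fi y) ^ 2) := by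
    funext y
    obtain ⟨h1, h2⟩ := hpos fi y
    rw [hH, Real.log_div (pow_ne_zero _ (ne_of_gt h1)) (pow_ne_zero _ (ne_of_gt h2))]
  -- derivative computations
  have key : ∀ (g : ℝ → ℝ) (x d : ℝ), HasDerivAt g d x → 0 < Real.cos (g x) →
      HasDerivAt (fun t => Real.log (Real.cos (g t) ^ 2))
        (-2 * (Real.sin (g x) / Real.cos (g x)) * d) x := by
    intro g x d hg hcg
    have h1 : HasDerivAt (fun t => Real.cos (g t) ^ 2)
        (2 * Real.cos (g x) ^ 1 * (-Real.sin (g x) * d)) x := (hg.cos).pow 2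
    have h2 := h1.log (pow_ne_zero 2 (ne_of_gt hcg))
    convert h2 using 1
    field_simp
  have hderivx : deriv (fun x => H x fj) fi
      = -2 * (Real.sin A / Real.cos A) * a + 2 * (Real.sin B / Real.cos B) * b := by
    rw [hHx]
    have h1 := key (fun x => dij x fj) fi a hij_i.hasDerivAt hA
    have h2 := key (fun x => dji x fj) fi b hji_i.hasDerivAt hB
    have := (h1.sub h2).deriv
    refine this.trans ?_; ring
  have hderivy : deriv (fun y => H fi y) fj
      = -2 * (Real.sin A / Real.cos A) * c + 2 * (Real.sin B / Real.cos B) * e := by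
    rw [hHy]
    have h1 := key (fun y => dij fi y) fj c hij_j.hasDerivAt hA
    have h2 := key (fun y => dji fi y) fj e hji_j.hasDerivAt hB
    have := (h1.sub h2).deriv
    refine this.trans ?_; ring
  have hexp : Real.exp (H fi fj) = Real.cos A ^ 2 / Real.cos B ^ 2 := by
    rw [hH]
    exact Real.exp_log (div_pos (pow_pos hA 2) (pow_pos hB 2))
  rw [hderivx, hderivy, hexp]
  rw [Real.tan_eq_sin_div_cos] at hsum_i hsum_j
  have hA1 : Real.sin A ^ 2 = 1 - Real.cos A ^ 2 := by
    have := Real.sin_sq_add_cos_sq A; linarith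
  have hB1 : Real.sin B ^ 2 = 1 - Real.cos B ^ 2 := by
    have := Real.sin_sq_add_cos_sq B; linarith
  have hb' : b = Real.sin A / Real.cos A - a := by linarith
  have he' : e = Real.sin B / Real.cos B - c := by linarith
  have hc' : c = (Real.cos A ^ 2 / Real.cos B ^ 2) * b := by
    field_simp at hsymm
    field_simp
    linarith [hsymm]
  have haa : a = Real.sin A / Real.cos A - b := by linarith
  rw [haa, he', hc']
  have hcA : Real.cos A ≠ 0 := ne_of_gt hA
  have hcB : Real.cos B ≠ 0 := ne_of_gt hB
  field_simp
  linear_combination (-Real.cos B) * hA1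
    + (Real.cos B) * hB1
end

section
/- Suppose H(f_i, f_j) is smooth with ∂²H/∂f_i∂f_j = 0, ∂H/∂f_i = −2a_i e^{2f_i}/(1 − a_i e^{2f_i}), ∂H/∂f_j = 2a_j e^{2f_j}/(1 − a_j e^{2f_j}), and e^H·∂H/∂f_i + ∂H/∂f_j = 2(e^H − 1) on a connected domain where 1 − a_i e^{2f_i} > 0 and 1 − a_j e^{2f_j} > 0. Then e^H = (1 − a_i e^{2f_i})/(1 − a_j e^{2f_j}). -/
open Real

theorem stmt18 (ai aj : ℝ) (H : ℝ → ℝ → ℝ)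
    (hsmooth : ContDiff ℝ (⊤ : ℕ∞) (fun p : ℝ × ℝ => H p.1 p.2))
    (hmixed : ∀ fi fj, deriv (fun y => deriv (fun x => H x y) fi) fj = 0)
    (hi : ∀ fi fj, 0 < 1 - ai * Real.exp (2 * fi) → 0 < 1 - aj * Real.exp (2 * fj) →
        deriv (fun x => H x fj) fi
          = -(2 * ai * Real.exp (2 * fi)) / (1 - ai * Real.exp (2 * fi)))
    (hj : ∀ fi fj, 0 < 1 - ai * Real.exp (2 * fi) → 0 < 1 - aj * Real.exp (2 * fj) →
        deriv (fun y => H fi y) fj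
          = 2 * aj * Real.exp (2 * fj) / (1 - aj * Real.exp (2 * fj)))
    (hid : ∀ fi fj, 0 < 1 - ai * Real.exp (2 * fi) → 0 < 1 - aj * Real.exp (2 * fj) →
        Real.exp (H fi fj) * deriv (fun x => H x fj) fi + deriv (fun y => H fi y) fj
          = 2 * (Real.exp (H fi fj) - 1)) :
    ∀ fi fj, 0 < 1 - ai * Real.exp (2 * fi) → 0 < 1 - aj * Real.exp (2 * fj) →
      Real.exp (H fi fj)
        = (1 - ai * Real.exp (2 * fi)) / (1 - aj * Real.exp (2 * fj)) := by
  intro fi fj hfi hfj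
  have h := hid fi fj hfi hfj
  rw [hi fi fj hfi hfj, hj fi fj hfi hfj] at h
  have h1 := hfi.ne'
  have h2 := hfj.ne'
  field_simp at h ⊢
  nlinarith [h]
end
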